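/- arXiv:0802.0361 — 5 statements merged into one kernel-verified Lean document; each statement's English description precedes it below -/
import Mathlib

section
/- Let Γ be a perfect group and V an R[Γ]-module. Then for every q ≥ 0 the space of higher invariants H⁰_q(Γ,V) = {v ∈ V : I_Γ^{q+1} v = 0} equals the space of ordinary invariants V^Γ = {v ∈ V : I_Γ v = 0}. -/
/-!
Write `J` for the ideal generated by the elements `γ - 1`. The elements `γ` with `γ - 1 ∈ J²`
form a subgroup, and it contains every commutator because
`⁅a, b⁆ - 1 = ab · ((a⁻¹ - 1)(b⁻¹ - 1) - (b⁻¹ - 1)(a⁻¹ - 1))`. For a perfect group this subgroup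
is everything, so `J ≤ J²`; hence `J` is idempotent and `J ^ (q + 1) = J`.
-/

open scoped commutatorElement

theorem Ideal.pow_succ_eq_self_of_le_mul {S : Type*} [Semiring S] {I : Ideal S}
    (h : I ≤ I * I) (n : ℕ) : I ^ (n + 1) = I := by
  induction n with
  | zero => exact Submodule.pow_one I
  | succ n ih => rw [Submodule.pow_succ, ih]; exact le_antisymm Ideal.mul_le_right h

namespace MonoidHom

variable {Γ S : Type*} [Group Γ] [Ring S]

def subOneMemSubgroup (f : Γ →* S) (K : Ideal S) : Subgroup Γ where
  carrier := {γ | f γ - 1 ∈ K}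
  one_mem' := by simp
  mul_mem' {a b} ha hb := by
    have h : f (a * b) - 1 = f a * (f b - 1) + (f a - 1) := by rw [map_mul]; noncomm_ring
    change f (a * b) - 1 ∈ K
    rw [h]
    exact K.add_mem (K.mul_mem_left _ hb) ha
  inv_mem' {a} ha := by
    have h : f a⁻¹ - 1 = -(f a⁻¹ * (f a - 1)) := by
      rw [mul_sub, ← map_mul, inv_mul_cancel, map_one, mul_one, neg_sub]
    change f a⁻¹ - 1 ∈ K
    rw [h]
    exact K.neg_mem (K.mul_mem_left _ ha)

theorem map_commutatorElement_sub_one (f : Γ →* S) (a b : Γ) :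
    f ⁅a, b⁆ - 1 =
      f (a * b) * ((f a⁻¹ - 1) * (f b⁻¹ - 1) - (f b⁻¹ - 1) * (f a⁻¹ - 1)) := by
  have h : ∀ x y : S, (x - 1) * (y - 1) - (y - 1) * (x - 1) = x * y - y * x := by
    intro x y; noncomm_ring
  rw [h, mul_sub, ← map_mul, ← map_mul, ← map_mul, ← map_mul, commutatorElement_def]
  simp [mul_assoc]

theorem commutator_le_subOneMemSubgroup (f : Γ →* S) {J : Ideal S} (hJ : ∀ γ, f γ - 1 ∈ J) :
    commutator Γ ≤ f.subOneMemSubgroup (J * J) := by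
  rw [commutator_eq_closure, Subgroup.closure_le]
  rintro _ ⟨a, b, rfl⟩
  change f ⁅a, b⁆ - 1 ∈ J * J
  rw [map_commutatorElement_sub_one]
  exact (J * J).mul_mem_left _ (sub_mem (Submodule.mul_mem_mul (hJ _) (hJ _))
    (Submodule.mul_mem_mul (hJ _) (hJ _)))

theorem span_range_sub_one_le_mul_self_of_commutator_eq_top (f : Γ →* S)
    (hperf : commutator Γ = ⊤) :
    Ideal.span (Set.range fun γ => f γ - 1) ≤
      Ideal.span (Set.range fun γ => f γ - 1) * Ideal.span (Set.range fun γ => f γ - 1) := by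
  refine Ideal.span_le.2 ?_
  rintro _ ⟨γ, rfl⟩
  have hγ : γ ∈ commutator Γ := hperf ▸ Subgroup.mem_top γ
  exact f.commutator_le_subOneMemSubgroup (fun γ => Ideal.subset_span (Set.mem_range_self γ)) hγ

end MonoidHom

/-- For a perfect group `Γ` and an `R[Γ]`-module `V`, the higher invariants
`H⁰_q(Γ,V) = {v : I_Γ^(q+1) v = 0}` coincide with the ordinary invariants
`V^Γ = {v : I_Γ v = 0}` for every `q ≥ 0`. -/
theorem higher_invariants_eq_invariants_of_perfect (R : Type*) [CommRing R]
    (Γ : Type*) [Group Γ] (hperf : commutator Γ = ⊤)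
    (V : Type*) [AddCommGroup V] [Module (MonoidAlgebra R Γ) V]
    (I : Ideal (MonoidAlgebra R Γ))
    (hI : I = Ideal.span (Set.range fun γ : Γ => MonoidAlgebra.of R Γ γ - 1))
    (q : ℕ) :
    {v : V | ∀ x ∈ I ^ (q + 1), x • v = 0} = {v : V | ∀ x ∈ I, x • v = 0} := by
  have hIdem : I ≤ I * I :=
    hI ▸ (MonoidAlgebra.of R Γ).span_range_sub_one_le_mul_self_of_commutator_eq_top hperf
  rw [Ideal.pow_succ_eq_self_of_le_mul hIdem q]
end

section
/- Let Γ be a compact topological group acting on a complex Hilbert space V by a continuous unitary (or merely continuous) representation. Then H⁰_q(Γ,V) = H⁰(Γ,V) for every q ≥ 0; that is, there are no higher invariants other than the classical invariants. -/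
/-!
A vector `v` in `H⁰_{q+1}` has all its differences `γ v - v` in `H⁰_q`, so by induction they are
invariant. Then `γⁿ v - v = n • (γ v - v)` grows linearly in `n`, while the orbit of `v` under the
compact group `Γ` is bounded; hence `γ v = v`.
-/

open Bornology

/-- The higher invariants `H⁰_q(Γ,V)` of a representation `ρ`: those `v` killed by every
product `(γ₀-1)⋯(γ_q-1)` of `q+1` augmentation generators (equivalently, `I_Γ^(q+1) v = 0`). -/
def higherInvariants {Γ V : Type*} [Group Γ] [AddCommGroup V] [Module ℂ V]
    (ρ : Γ →* (V →ₗ[ℂ] V)) (q : ℕ) : Set V :=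
  {v | ∀ l : List Γ, l.length = q + 1 → l.foldr (fun γ w => ρ γ w - w) v = 0}

lemma Module.End.pow_apply_sub_eq_nsmul {R M : Type*} [Semiring R] [AddCommGroup M] [Module R M]
    (T : Module.End R M) {v : M} (h : T (T v - v) = T v - v) (n : ℕ) :
    (T ^ n) v - v = n • (T v - v) := by
  induction n with
  | zero => simp
  | succ n ih =>
    calc (T ^ (n + 1)) v - v = T ((T ^ n) v - v) + (T v - v) := by
          rw [pow_succ', Module.End.mul_apply, map_sub]; abel
      _ = (n + 1) • (T v - v) := by
          rw [ih, map_nsmul, h, succ_nsmul]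

lemma eq_zero_of_isBounded_range_nsmul {E : Type*} [NormedAddCommGroup E] [NormedSpace ℝ E]
    {w : E} (hb : IsBounded (Set.range fun n : ℕ => n • w)) : w = 0 := by
  obtain ⟨C, hC⟩ := isBounded_iff_forall_norm_le.mp hb
  by_contra hw
  obtain ⟨n, hn⟩ := exists_nat_gt (C / ‖w‖)
  have hle : (n : ℝ) * ‖w‖ ≤ C := by
    simpa [RCLike.norm_nsmul ℝ] using hC _ ⟨n, rfl⟩
  rw [div_lt_iff₀ (norm_pos_iff.mpr hw)] at hn
  linarith

lemma Module.End.apply_eq_self_of_isBounded_orbit {R E : Type*} [Semiring R]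
    [NormedAddCommGroup E] [NormedSpace ℝ E] [Module R E] (T : Module.End R E) {v : E}
    (h : T (T v - v) = T v - v) (hb : IsBounded (Set.range fun n : ℕ => (T ^ n) v)) :
    T v = v := by
  have hdiff : IsBounded (Set.range fun n : ℕ => n • (T v - v)) := by
    simp_rw [← T.pow_apply_sub_eq_nsmul h]
    exact (hb.sub (isBounded_singleton (x := v))).subset <| Set.range_subset_iff.2 fun n =>
      Set.sub_mem_sub ⟨n, rfl⟩ rfl
  exact sub_eq_zero.mp (eq_zero_of_isBounded_range_nsmul hdiff)

section higherInvariants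

variable {Γ V : Type*} [Group Γ] [AddCommGroup V] [Module ℂ V] (ρ : Γ →* (V →ₗ[ℂ] V))

lemma mem_higherInvariants_zero_iff {v : V} :
    v ∈ higherInvariants ρ 0 ↔ ∀ γ : Γ, ρ γ v = v := by
  refine ⟨fun hv γ => sub_eq_zero.mp (by simpa using hv [γ] rfl), fun hv l hl => ?_⟩
  obtain ⟨γ, rfl⟩ := List.length_eq_one_iff.mp hl
  simp [hv γ]

lemma sub_mem_higherInvariants {q : ℕ} {v : V} (hv : v ∈ higherInvariants ρ (q + 1)) (γ : Γ) :
    ρ γ v - v ∈ higherInvariants ρ q := fun l hl => by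
  simpa [List.foldr_append] using hv (l ++ [γ]) (by simp [hl])

lemma invariants_subset_higherInvariants (q : ℕ) :
    {v : V | ∀ γ : Γ, ρ γ v = v} ⊆ higherInvariants ρ q := by
  intro v hv l hl
  have hfix (l : List Γ) (γ : Γ) :
      ρ γ (l.foldr (fun γ w => ρ γ w - w) v) = l.foldr (fun γ w => ρ γ w - w) v := by
    induction l generalizing γ with
    | nil => exact hv γ
    | cons δ l ih => simp [ih]
  obtain ⟨γ, l, rfl⟩ := List.exists_cons_of_length_eq_add_one hl
  simp [hfix l γ]

end higherInvariants

theorem higher_invariants_eq_of_compact_general (Γ : Type*) [Group Γ] [TopologicalSpace Γ]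
    [CompactSpace Γ]
    (V : Type*) [NormedAddCommGroup V] [InnerProductSpace ℂ V]
    (ρ : Γ →* (V →ₗ[ℂ] V))
    (hcont : Continuous fun p : Γ × V => ρ p.1 p.2) (q : ℕ) :
    higherInvariants ρ q = {v : V | ∀ γ : Γ, ρ γ v = v} := by
  have hbdd (v : V) (γ : Γ) : IsBounded (Set.range fun n : ℕ => (ρ γ ^ n) v) :=
    (isCompact_range (hcont.comp (Continuous.prodMk_left v))).isBounded.subset
      (Set.range_subset_iff.2 fun n => ⟨γ ^ n, by simp⟩)
  refine (invariants_subset_higherInvariants ρ q).antisymm' ?_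
  induction q with
  | zero => exact fun v hv => (mem_higherInvariants_zero_iff ρ).mp hv
  | succ q ih =>
    exact fun v hv γ => Module.End.apply_eq_self_of_isBounded_orbit (ρ γ)
      (ih (sub_mem_higherInvariants ρ hv γ) γ) (hbdd v γ)

/-- For a compact group `Γ` acting continuously on a complex Hilbert space `V`,
there are no higher invariants beyond the classical ones: `H⁰_q(Γ,V) = H⁰(Γ,V) = V^Γ`
for every `q ≥ 0`. -/
theorem higher_invariants_eq_of_compact (Γ : Type*) [Group Γ] [TopologicalSpace Γ]
    [IsTopologicalGroup Γ] [CompactSpace Γ]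
    (V : Type*) [NormedAddCommGroup V] [InnerProductSpace ℂ V] [CompleteSpace V]
    (ρ : Γ →* (V →ₗ[ℂ] V))
    (hcont : Continuous fun p : Γ × V => ρ p.1 p.2) (q : ℕ) :
    higherInvariants ρ q = {v : V | ∀ γ : Γ, ρ γ v = v} :=
  higher_invariants_eq_of_compact_general Γ V ρ hcont q
end

section
/- Let (G,Γ) be a Hecke pair, V a C[G]-module, g ∈ G, and write ΓgΓ = ⊔_{j=1}^n g_jΓ as a disjoint union of left cosets. If v ∈ H⁰_q(Γ,V), then Σ_{j=1}^n g_j v lies in H⁰_q(Γ(g), V), where Γ(g) is the kernel of the Γ-action on ΓgΓ/Γ. -/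
/-- Higher invariants `H⁰_q(Σ,V) = {v : I_Σ^(q+1) v = 0}` for a subgroup `Σ ≤ G` acting on a
`ℂ[G]`-module `V`: the elements killed by every product of `q+1` generators `(σ-1)`, `σ ∈ Σ`. -/
def heckeHigherInvariants {G : Type*} [Group G] (S : Subgroup G)
    (V : Type*) [AddCommGroup V] [Module (MonoidAlgebra ℂ G) V] (q : ℕ) : Set V :=
  {v | ∀ l : List G, (∀ x ∈ l, x ∈ S) → l.length = q + 1 →
    l.foldr (fun γ w => MonoidAlgebra.of ℂ G γ • w - w) v = 0}

/-!
Conjugation moves the augmentation operators past a coset representative: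
`(σ - 1) g_j = g_j (g_j⁻¹ σ g_j - 1)`. For `σ ∈ Γ(g)` the element `g_j⁻¹ σ g_j` lies in `Γ`,
because `σ` fixes the coset `g_j Γ`. Hence every product of `q + 1` operators `σ - 1` with
`σ ∈ Γ(g)` sends `g_j v` to `g_j` times a product of `q + 1` operators `γ - 1` with `γ ∈ Γ`
applied to `v`, which vanishes; summing over `j` gives the claim.
-/

open MonoidAlgebra

section

variable {G : Type*} [Group G] {V : Type*} [AddCommGroup V] [Module (MonoidAlgebra ℂ G) V]

/-- `augProdSMul [γ₁, …, γₖ] v = (γ₁ - 1) ⋯ (γₖ - 1) • v`. -/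
noncomputable def augProdSMul (l : List G) (v : V) : V :=
  l.foldr (fun γ w => of ℂ G γ • w - w) v

theorem augProdSMul_sum {ι : Type*} (l : List G) (s : Finset ι) (f : ι → V) :
    augProdSMul l (∑ i ∈ s, f i) = ∑ i ∈ s, augProdSMul l (f i) := by
  induction l with
  | nil => rfl
  | cons γ l ih =>
    simp only [augProdSMul, List.foldr_cons] at ih ⊢
    rw [ih, Finset.smul_sum, Finset.sum_sub_distrib]

theorem augProdSMul_of_smul (l : List G) (h : G) (v : V) :
    augProdSMul l (of ℂ G h • v) = of ℂ G h • augProdSMul (l.map fun a => h⁻¹ * a * h) v := by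
  induction l with
  | nil => rfl
  | cons γ l ih =>
    simp only [augProdSMul, List.foldr_cons, List.map_cons] at ih ⊢
    rw [ih, smul_sub, smul_smul, smul_smul, ← map_mul, ← map_mul]
    congr 3
    group

theorem sum_mem_heckeHigherInvariants {ι : Type*} (S : Subgroup G) (q : ℕ) (s : Finset ι)
    (f : ι → V) (hf : ∀ i ∈ s, f i ∈ heckeHigherInvariants S V q) :
    ∑ i ∈ s, f i ∈ heckeHigherInvariants S V q := fun l hl hlen => by
  rw [← augProdSMul, augProdSMul_sum]
  exact Finset.sum_eq_zero fun i hi => hf i hi l hl hlen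

theorem of_smul_mem_heckeHigherInvariants {S T : Subgroup G} {q : ℕ} {v : V} (h : G)
    (hconj : ∀ a ∈ S, h⁻¹ * a * h ∈ T) (hv : v ∈ heckeHigherInvariants T V q) :
    of ℂ G h • v ∈ heckeHigherInvariants S V q := fun l hl hlen => by
  rw [← augProdSMul, augProdSMul_of_smul]
  refine (congrArg _ (hv _ ?_ ?_)).trans (smul_zero _)
  · simpa only [List.mem_map, forall_exists_index, and_imp, forall_apply_eq_imp_iff₂]
      using fun a ha => hconj a (hl a ha)
  · rwa [List.length_map]

end

theorem hecke_sum_mem_higher_invariants_general (G : Type*) [Group G] (Γ : Subgroup G)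
    (V : Type*) [AddCommGroup V] [Module (MonoidAlgebra ℂ G) V]
    (g : G) (n : ℕ) (gj : Fin n → G)
    (hcover : {x : G | ∃ a ∈ Γ, ∃ b ∈ Γ, x = a * g * b} =
      ⋃ j : Fin n, {y : G | ∃ c ∈ Γ, y = gj j * c})
    (K : Subgroup G)
    (hK : ∀ x : G, x ∈ K ↔ x ∈ Γ ∧ ∀ h ∈ {x : G | ∃ a ∈ Γ, ∃ b ∈ Γ, x = a * g * b},
      (QuotientGroup.mk (x * h) : G ⧸ Γ) = QuotientGroup.mk h)
    (q : ℕ) (v : V) (hv : v ∈ heckeHigherInvariants Γ V q) :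
    (∑ j : Fin n, MonoidAlgebra.of ℂ G (gj j) • v) ∈ heckeHigherInvariants K V q := by
  refine sum_mem_heckeHigherInvariants K q _ _ fun j _ =>
    of_smul_mem_heckeHigherInvariants (gj j) (fun a ha => ?_) hv
  have hj : gj j ∈ {x : G | ∃ a ∈ Γ, ∃ b ∈ Γ, x = a * g * b} := by
    rw [hcover]
    exact Set.mem_iUnion.mpr ⟨j, 1, one_mem Γ, (mul_one _).symm⟩
  have hfix := ((hK a).mp ha).2 (gj j) hj
  rw [mul_assoc]
  exact QuotientGroup.eq.mp hfix.symm

/-- If `ΓgΓ = ⊔_{j=1}^n g_jΓ` and `v ∈ H⁰_q(Γ,V)`, then `Σ_j g_j v` lies in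
`H⁰_q(Γ(g),V)`, where `Γ(g)` is the kernel of the `Γ`-action on `ΓgΓ/Γ`. -/
theorem hecke_sum_mem_higher_invariants (G : Type*) [Group G] (Γ : Subgroup G)
    (hecke : ∀ g : G,
      ((QuotientGroup.mk '' {x : G | ∃ a ∈ Γ, ∃ b ∈ Γ, x = a * g * b} : Set (G ⧸ Γ))).Finite)
    (V : Type*) [AddCommGroup V] [Module (MonoidAlgebra ℂ G) V]
    (g : G) (n : ℕ) (gj : Fin n → G)
    (hcover : {x : G | ∃ a ∈ Γ, ∃ b ∈ Γ, x = a * g * b} =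
      ⋃ j : Fin n, {y : G | ∃ c ∈ Γ, y = gj j * c})
    (hdisj : ∀ i j : Fin n, i ≠ j →
      Disjoint {y : G | ∃ c ∈ Γ, y = gj i * c} {y : G | ∃ c ∈ Γ, y = gj j * c})
    (K : Subgroup G)
    (hK : ∀ x : G, x ∈ K ↔ x ∈ Γ ∧ ∀ h ∈ {x : G | ∃ a ∈ Γ, ∃ b ∈ Γ, x = a * g * b},
      (QuotientGroup.mk (x * h) : G ⧸ Γ) = QuotientGroup.mk h)
    (q : ℕ) (v : V) (hv : v ∈ heckeHigherInvariants Γ V q) :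
    (∑ j : Fin n, MonoidAlgebra.of ℂ G (gj j) • v) ∈ heckeHigherInvariants K V q :=
  hecke_sum_mem_higher_invariants_general G Γ V g n gj hcover K hK q v hv
end

section
/- Let (G,Γ) be a Hecke pair, V a C[G]-module, g ∈ G, ΓgΓ = ⊔_{j=1}^n g_jΓ, and γ_1,...,γ_n ∈ Γ. If v ∈ H⁰_q(Γ,V) with q ≥ 1, then Σ_{j=1}^n g_j(γ_j - 1)v lies in H⁰_{q-1}(Γ(g), V). -/
namespace HeckeHigherInvariants

variable {G : Type*} [Group G] {V : Type*} [AddCommGroup V] [Module (MonoidAlgebra ℂ G) V]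

lemma foldr_sum {ι : Type*} (s : Finset ι) (l : List G) (f : ι → V) :
    l.foldr (fun γ w => MonoidAlgebra.of ℂ G γ • w - w) (∑ i ∈ s, f i)
      = ∑ i ∈ s, l.foldr (fun γ w => MonoidAlgebra.of ℂ G γ • w - w) (f i) := by
  induction l with
  | nil => rfl
  | cons a t ih => simp only [List.foldr_cons, ih, Finset.smul_sum, Finset.sum_sub_distrib]

lemma foldr_smul (g : G) (l : List G) (u : V) :
    l.foldr (fun γ w => MonoidAlgebra.of ℂ G γ • w - w) (MonoidAlgebra.of ℂ G g • u)
      = MonoidAlgebra.of ℂ G g •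
          (l.map fun x => g⁻¹ * x * g).foldr (fun γ w => MonoidAlgebra.of ℂ G γ • w - w) u := by
  induction l with
  | nil => rfl
  | cons κ t ih =>
    have hconj : κ * g = g * (g⁻¹ * κ * g) := by group
    simp only [List.foldr_cons, List.map_cons, ih, smul_sub, smul_smul, ← map_mul, hconj]

lemma sum_mem {S : Subgroup G} {q : ℕ} {ι : Type*} (s : Finset ι) {f : ι → V}
    (hf : ∀ i ∈ s, f i ∈ heckeHigherInvariants S V q) :
    ∑ i ∈ s, f i ∈ heckeHigherInvariants S V q := fun l hl hlen => by
  rw [foldr_sum]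
  exact Finset.sum_eq_zero fun i hi => hf i hi l hl hlen

lemma smul_sub_self_mem {S : Subgroup G} {q : ℕ} {v : V}
    (hv : v ∈ heckeHigherInvariants S V (q + 1)) {γ : G} (hγ : γ ∈ S) :
    MonoidAlgebra.of ℂ G γ • v - v ∈ heckeHigherInvariants S V q := fun l hl hlen => by
  have hz := hv (l ++ [γ]) (by simpa [or_imp, forall_and] using ⟨hl, hγ⟩) (by simp [hlen])
  simpa [List.foldr_append] using hz

lemma smul_mem_of_conj_mem {Γ K : Subgroup G} {g : G} (hK : ∀ x ∈ K, g⁻¹ * x * g ∈ Γ)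
    {q : ℕ} {u : V} (hu : u ∈ heckeHigherInvariants Γ V q) :
    MonoidAlgebra.of ℂ G g • u ∈ heckeHigherInvariants K V q := fun l hl hlen => by
  rw [foldr_smul, hu _ (by simpa using fun x hx => hK x (hl x hx)) (by simpa using hlen),
    smul_zero]

end HeckeHigherInvariants

lemma inv_mul_mul_mem_of_mk_mul_eq {G : Type*} [Group G] {Γ : Subgroup G} {x h : G}
    (hx : (QuotientGroup.mk (x * h) : G ⧸ Γ) = QuotientGroup.mk h) : h⁻¹ * x * h ∈ Γ := by
  have hmem := Γ.inv_mem (QuotientGroup.eq.mp hx)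
  rwa [show ((x * h)⁻¹ * h)⁻¹ = h⁻¹ * x * h by group] at hmem

theorem hecke_difference_mem_lower_invariants_general (G : Type*) [Group G] (Γ : Subgroup G)
    (V : Type*) [AddCommGroup V] [Module (MonoidAlgebra ℂ G) V]
    (g : G) (n : ℕ) (gj : Fin n → G)
    (hcover : {x : G | ∃ a ∈ Γ, ∃ b ∈ Γ, x = a * g * b} =
      ⋃ j : Fin n, {y : G | ∃ c ∈ Γ, y = gj j * c})
    (γ : Fin n → G) (hγ : ∀ j, γ j ∈ Γ)
    (K : Subgroup G)
    (hK : ∀ x : G, x ∈ K ↔ x ∈ Γ ∧ ∀ h ∈ {x : G | ∃ a ∈ Γ, ∃ b ∈ Γ, x = a * g * b},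
      (QuotientGroup.mk (x * h) : G ⧸ Γ) = QuotientGroup.mk h)
    (q : ℕ) (hq : 1 ≤ q) (v : V) (hv : v ∈ heckeHigherInvariants Γ V q) :
    (∑ j : Fin n, MonoidAlgebra.of ℂ G (gj j) • (MonoidAlgebra.of ℂ G (γ j) • v - v)) ∈
      heckeHigherInvariants K V (q - 1) := by
  have hgj_mem : ∀ j, gj j ∈ {x : G | ∃ a ∈ Γ, ∃ b ∈ Γ, x = a * g * b} := fun j => by
    rw [hcover]
    exact Set.mem_iUnion.mpr ⟨j, 1, Γ.one_mem, (mul_one _).symm⟩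
  have hconj : ∀ j, ∀ x ∈ K, (gj j)⁻¹ * x * gj j ∈ Γ := fun j x hx =>
    inv_mul_mul_mem_of_mk_mul_eq (((hK x).mp hx).2 _ (hgj_mem j))
  obtain ⟨p, rfl⟩ : ∃ p, q = p + 1 := ⟨q - 1, by omega⟩
  exact HeckeHigherInvariants.sum_mem _ fun j _ =>
    HeckeHigherInvariants.smul_mem_of_conj_mem (hconj j)
      (HeckeHigherInvariants.smul_sub_self_mem hv (hγ j))

/-- If `ΓgΓ = ⊔_{j=1}^n g_jΓ`, `γ_1,…,γ_n ∈ Γ` and `v ∈ H⁰_q(Γ,V)` with `q ≥ 1`,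
then `Σ_j g_j(γ_j - 1)v ∈ H⁰_{q-1}(Γ(g),V)`. -/
theorem hecke_difference_mem_lower_invariants (G : Type*) [Group G] (Γ : Subgroup G)
    (hecke : ∀ g : G,
      ((QuotientGroup.mk '' {x : G | ∃ a ∈ Γ, ∃ b ∈ Γ, x = a * g * b} : Set (G ⧸ Γ))).Finite)
    (V : Type*) [AddCommGroup V] [Module (MonoidAlgebra ℂ G) V]
    (g : G) (n : ℕ) (gj : Fin n → G)
    (hcover : {x : G | ∃ a ∈ Γ, ∃ b ∈ Γ, x = a * g * b} =
      ⋃ j : Fin n, {y : G | ∃ c ∈ Γ, y = gj j * c})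
    (hdisj : ∀ i j : Fin n, i ≠ j →
      Disjoint {y : G | ∃ c ∈ Γ, y = gj i * c} {y : G | ∃ c ∈ Γ, y = gj j * c})
    (γ : Fin n → G) (hγ : ∀ j, γ j ∈ Γ)
    (K : Subgroup G)
    (hK : ∀ x : G, x ∈ K ↔ x ∈ Γ ∧ ∀ h ∈ {x : G | ∃ a ∈ Γ, ∃ b ∈ Γ, x = a * g * b},
      (QuotientGroup.mk (x * h) : G ⧸ Γ) = QuotientGroup.mk h)
    (q : ℕ) (hq : 1 ≤ q) (v : V) (hv : v ∈ heckeHigherInvariants Γ V q) :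
    (∑ j : Fin n, MonoidAlgebra.of ℂ G (gj j) • (MonoidAlgebra.of ℂ G (γ j) • v - v)) ∈
      heckeHigherInvariants K V (q - 1) :=
  hecke_difference_mem_lower_invariants_general G Γ V g n gj hcover γ hγ K hK q hq v hv
end

section
/- Let G = ℚ_p ⋊ ℚ_p^× (with multiplication (x,y)(x',y') = (x + y x', y y')), Γ = ℤ_p ⋊ ℤ_p^×, and g = (0,p). Then |ΓgΓ/Γ| = p while |Γ\ΓgΓ| = 1; in particular the Hecke pair (G,Γ) is not unimodular. -/
/-
Conjugation by `g = (0, p)` multiplies translation parts by `p`, so `g Γ g⁻¹ ⊆ Γ`; hence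
`ΓgΓ = Γg` is a single right coset, namely `{(x, y) : ‖x‖ ≤ 1, ‖y‖ = p⁻¹}`. Two of its elements
lie in the same left coset exactly when their translation parts agree modulo `p ℤ_p`, so its
left cosets are indexed by the residues `ℤ_p / p ℤ_p ≅ ZMod p`.
-/

open SemidirectProduct

/-- The scaling action of `ℚ_p^×` on the additive group `ℚ_p`, as a homomorphism into the
automorphisms of `Multiplicative ℚ_p`. -/
noncomputable def padicScalingAut (p : ℕ) [Fact p.Prime] :
    ℚ_[p]ˣ →* MulAut (Multiplicative ℚ_[p]) where
  toFun y := AddEquiv.toMultiplicative ((DistribMulAction.toAddAut ℚ_[p]ˣ ℚ_[p]) y)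
  map_one' := by
    ext x; exact congrArg Multiplicative.ofAdd (one_smul ℚ_[p]ˣ x.toAdd)
  map_mul' y z := by
    ext x; exact congrArg Multiplicative.ofAdd (mul_smul y z x.toAdd)

/-- The semidirect product `G = ℚ_p ⋊ ℚ_p^×`, with `(x,y)(x',y') = (x + y x', y y')`. -/
noncomputable abbrev PadicAffineGroup (p : ℕ) [Fact p.Prime] :=
  SemidirectProduct (Multiplicative ℚ_[p]) ℚ_[p]ˣ (padicScalingAut p)

/-- The compact open subgroup `Γ = ℤ_p ⋊ ℤ_p^×` of `ℚ_p ⋊ ℚ_p^×`. -/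
noncomputable def padicAffineGamma (p : ℕ) [Fact p.Prime] : Subgroup (PadicAffineGroup p) where
  carrier := {g | ‖g.left.toAdd‖ ≤ 1 ∧ ‖(g.right : ℚ_[p])‖ = 1}
  one_mem' := by
    constructor
    · show ‖(Multiplicative.toAdd (1 : Multiplicative ℚ_[p]))‖ ≤ 1
      simp
    · show ‖((1 : ℚ_[p]ˣ) : ℚ_[p])‖ = 1
      simp
  mul_mem' := by
    rintro a b ⟨ha1, ha2⟩ ⟨hb1, hb2⟩
    constructor
    · show ‖(Multiplicative.toAdd ((a * b).left))‖ ≤ 1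
      have : (a * b).left = a.left * (padicScalingAut p a.right) b.left := rfl
      rw [this]
      have h2 : (Multiplicative.toAdd (a.left * (padicScalingAut p a.right) b.left))
          = a.left.toAdd + (a.right : ℚ_[p]) * b.left.toAdd := rfl
      rw [h2]
      refine le_trans (Padic.nonarchimedean _ _) (max_le ha1 ?_)
      rw [norm_mul, ha2, one_mul]; exact hb1
    · show ‖(((a * b).right : ℚ_[p]ˣ) : ℚ_[p])‖ = 1
      have : (a * b).right = a.right * b.right := rfl
      rw [this, Units.val_mul, norm_mul, ha2, hb2, one_mul]
  inv_mem' := by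
    rintro a ⟨ha1, ha2⟩
    have hinv : ‖((a.right⁻¹ : ℚ_[p]ˣ) : ℚ_[p])‖ = 1 := by
      have := norm_mul ((a.right : ℚ_[p]ˣ) : ℚ_[p]) ((a.right⁻¹ : ℚ_[p]ˣ) : ℚ_[p])
      rw [← Units.val_mul, mul_inv_cancel] at this
      simp only [Units.val_one, norm_one] at this
      rw [ha2, one_mul] at this
      exact this.symm
    constructor
    · show ‖(Multiplicative.toAdd (a⁻¹).left)‖ ≤ 1
      have h2 : (Multiplicative.toAdd (a⁻¹).left)
          = ((a.right⁻¹ : ℚ_[p]ˣ) : ℚ_[p]) * (-(a.left.toAdd)) := rfl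
      rw [h2, norm_mul, hinv, one_mul, norm_neg]
      exact ha1
    · show ‖(((a⁻¹).right : ℚ_[p]ˣ) : ℚ_[p])‖ = 1
      exact hinv

open DoubleCoset

section

variable {G : Type*} [Group G] {H : Subgroup G} {g : G}

theorem mem_doubleCoset_iff_mul_inv_mem (hg : ∀ h ∈ H, g * h * g⁻¹ ∈ H) {x : G} :
    x ∈ doubleCoset g H H ↔ x * g⁻¹ ∈ H := by
  rw [mem_doubleCoset]
  constructor
  · rintro ⟨a, ha, b, hb, rfl⟩
    simpa only [mul_assoc] using H.mul_mem ha (hg b hb)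
  · intro hx
    exact ⟨x * g⁻¹, hx, 1, H.one_mem, by group⟩

theorem image_mk_rightRel_doubleCoset (hg : ∀ h ∈ H, g * h * g⁻¹ ∈ H) :
    Quotient.mk (QuotientGroup.rightRel H) '' doubleCoset g H H = {Quotient.mk _ g} := by
  refine Set.eq_singleton_iff_unique_mem.mpr ⟨⟨g, mem_doubleCoset_self H H g, rfl⟩, ?_⟩
  rintro _ ⟨x, hx, rfl⟩
  exact (Quotient.sound (QuotientGroup.rightRel_apply.mpr
    ((mem_doubleCoset_iff_mul_inv_mem hg).mp hx))).symm

end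

namespace Padic

variable {p : ℕ} [Fact p.Prime]

theorem norm_le_inv_iff_lt_one (x : ℚ_[p]) : ‖x‖ ≤ (p : ℝ)⁻¹ ↔ ‖x‖ < 1 := by
  simpa using norm_le_pow_iff_norm_lt_pow_add_one x (-1)

theorem norm_natCast_val_sub_lt_one_iff (i j : ZMod p) :
    ‖(i.val : ℚ_[p]) - j.val‖ < 1 ↔ i = j := by
  have hcast : (i.val : ℚ_[p]) - j.val = (((i.val - j.val : ℤ) : ℤ_[p]) : ℚ_[p]) := by
    push_cast; rfl
  rw [hcast, ← PadicInt.norm_def, PadicInt.norm_int_lt_one_iff_dvd,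
    ← ZMod.intCast_zmod_eq_zero_iff_dvd]
  push_cast
  simp [sub_eq_zero]

theorem exists_norm_sub_natCast_val_lt_one {c : ℚ_[p]} (hc : ‖c‖ ≤ 1) :
    ∃ j : ZMod p, ‖c - j.val‖ < 1 := by
  obtain ⟨n, hnp, hn⟩ := PadicInt.exists_mem_range (⟨c, hc⟩ : ℤ_[p])
  refine ⟨n, ?_⟩
  rw [ZMod.val_natCast_of_lt hnp]
  exact PadicInt.mem_nonunits.mp hn

end Padic

namespace PadicAffineGroup

variable {p : ℕ} [Fact p.Prime]

theorem toAdd_mul_left (x y : PadicAffineGroup p) :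
    (x * y).left.toAdd = x.left.toAdd + x.right * y.left.toAdd := rfl

theorem toAdd_inv_left (x : PadicAffineGroup p) :
    x⁻¹.left.toAdd = ↑x.right⁻¹ * -x.left.toAdd := rfl

theorem mem_padicAffineGamma_iff {x : PadicAffineGroup p} :
    x ∈ padicAffineGamma p ↔ ‖x.left.toAdd‖ ≤ 1 ∧ ‖(x.right : ℚ_[p])‖ = 1 := Iff.rfl

theorem inv_mul_mem_padicAffineGamma_iff (x y : PadicAffineGroup p) :
    x⁻¹ * y ∈ padicAffineGamma p ↔
      ‖y.left.toAdd - x.left.toAdd‖ ≤ ‖(x.right : ℚ_[p])‖ ∧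
        ‖(y.right : ℚ_[p])‖ = ‖(x.right : ℚ_[p])‖ := by
  have hx : 0 < ‖(x.right : ℚ_[p])‖ := norm_pos_iff.mpr x.right.ne_zero
  rw [mem_padicAffineGamma_iff, toAdd_mul_left, toAdd_inv_left, SemidirectProduct.inv_right,
    ← mul_add, neg_add_eq_sub, SemidirectProduct.mul_right, SemidirectProduct.inv_right]
  simp only [Units.val_mul, Units.val_inv_eq_inv_val, norm_mul, norm_inv,
    inv_mul_le_iff₀ hx, mul_one, inv_mul_eq_one₀ hx.ne', eq_comm]

theorem mul_inr_inv_mem_padicAffineGamma_iff (x : PadicAffineGroup p) (u : ℚ_[p]ˣ) :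
    x * (inr u)⁻¹ ∈ padicAffineGamma p ↔
      ‖x.left.toAdd‖ ≤ 1 ∧ ‖(x.right : ℚ_[p])‖ = ‖(u : ℚ_[p])‖ := by
  have hu : ‖(u : ℚ_[p])‖ ≠ 0 := norm_ne_zero_iff.mpr u.ne_zero
  rw [← map_inv, mem_padicAffineGamma_iff, toAdd_mul_left, SemidirectProduct.mul_right]
  simp only [left_inr, right_inr, toAdd_one, mul_zero, add_zero, Units.val_mul,
    Units.val_inv_eq_inv_val, norm_mul, norm_inv, mul_inv_eq_one₀ hu]

theorem inr_mul_mul_inr_inv_mem_padicAffineGamma {u : ℚ_[p]ˣ} (hu : ‖(u : ℚ_[p])‖ ≤ 1)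
    {γ : PadicAffineGroup p} (hγ : γ ∈ padicAffineGamma p) :
    inr u * γ * (inr u)⁻¹ ∈ padicAffineGamma p := by
  rw [mul_inr_inv_mem_padicAffineGamma_iff, toAdd_mul_left, SemidirectProduct.mul_right]
  simp only [left_inr, right_inr, toAdd_one, zero_add, Units.val_mul, norm_mul, hγ.2, mul_one,
    and_true]
  exact mul_le_one₀ hu (norm_nonneg _) hγ.1

theorem mem_doubleCoset_inr_iff {u : ℚ_[p]ˣ} (hu : ‖(u : ℚ_[p])‖ ≤ 1)
    {x : PadicAffineGroup p} :
    x ∈ doubleCoset (inr u) (padicAffineGamma p) (padicAffineGamma p) ↔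
      ‖x.left.toAdd‖ ≤ 1 ∧ ‖(x.right : ℚ_[p])‖ = ‖(u : ℚ_[p])‖ :=
  (mem_doubleCoset_iff_mul_inv_mem fun _ ↦ inr_mul_mul_inr_inv_mem_padicAffineGamma hu).trans
    (mul_inr_inv_mem_padicAffineGamma_iff x u)

theorem card_image_mk_rightRel_doubleCoset_inr {u : ℚ_[p]ˣ} (hu : ‖(u : ℚ_[p])‖ ≤ 1) :
    Nat.card (Quotient.mk (QuotientGroup.rightRel (padicAffineGamma p)) ''
      doubleCoset (inr u) (padicAffineGamma p) (padicAffineGamma p)) = 1 := by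
  rw [image_mk_rightRel_doubleCoset fun _ ↦ inr_mul_mul_inr_inv_mem_padicAffineGamma hu,
    Nat.card_unique]

theorem card_image_mk_doubleCoset_inr {u : ℚ_[p]ˣ} (hu : ‖(u : ℚ_[p])‖ = (p : ℝ)⁻¹) :
    Nat.card (QuotientGroup.mk ''
      doubleCoset (inr u) (padicAffineGamma p) (padicAffineGamma p) :
        Set (PadicAffineGroup p ⧸ padicAffineGamma p)) = p := by
  have hu_le : ‖(u : ℚ_[p])‖ ≤ 1 :=
    hu.trans_le (inv_le_one_of_one_le₀ (mod_cast (Fact.out : p.Prime).one_le))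
  let rep (j : ZMod p) : PadicAffineGroup p ⧸ padicAffineGamma p :=
    QuotientGroup.mk (⟨Multiplicative.ofAdd (j.val : ℚ_[p]), u⟩ : PadicAffineGroup p)
  have mk_eq_rep {x : PadicAffineGroup p} (hx : ‖(x.right : ℚ_[p])‖ = ‖(u : ℚ_[p])‖)
      (j : ZMod p) :
      rep j = QuotientGroup.mk x ↔ ‖x.left.toAdd - j.val‖ < 1 := by
    rw [QuotientGroup.eq, inv_mul_mem_padicAffineGamma_iff]
    simp [hx, hu, Padic.norm_le_inv_iff_lt_one]
  have rep_injective : Function.Injective rep := fun i j hij ↦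
    (Padic.norm_natCast_val_sub_lt_one_iff i j).mp ((mk_eq_rep rfl j).mp hij.symm)
  have range_rep : Set.range rep = QuotientGroup.mk ''
      doubleCoset (inr u) (padicAffineGamma p) (padicAffineGamma p) := by
    ext q
    constructor
    · rintro ⟨j, rfl⟩
      refine ⟨_, (mem_doubleCoset_inr_iff hu_le).mpr ⟨?_, rfl⟩, rfl⟩
      exact_mod_cast Padic.norm_int_le_one j.val
    · rintro ⟨x, hx, rfl⟩
      obtain ⟨hx_left, hx_right⟩ := (mem_doubleCoset_inr_iff hu_le).mp hx
      obtain ⟨j, hj⟩ := Padic.exists_norm_sub_natCast_val_lt_one hx_left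
      exact ⟨j, (mk_eq_rep hx_right j).mpr hj⟩
  rw [← range_rep, Nat.card_range_of_injective rep_injective, Nat.card_zmod]

end PadicAffineGroup

/-- For `G = ℚ_p ⋊ ℚ_p^×`, `Γ = ℤ_p ⋊ ℤ_p^×` and `g = (0,p)`, the double coset
`ΓgΓ` decomposes into `p` left `Γ`-cosets but a single right `Γ`-coset; in particular the
Hecke pair `(G,Γ)` is not unimodular. -/
theorem padic_hecke_pair_not_unimodular (p : ℕ) [hp : Fact p.Prime]
    (g : PadicAffineGroup p)
    (hg : g = ⟨Multiplicative.ofAdd (0 : ℚ_[p]),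
      Units.mk0 (p : ℚ_[p]) (by exact_mod_cast hp.out.ne_zero)⟩) :
    Nat.card (QuotientGroup.mk ''
        {x : PadicAffineGroup p | ∃ a ∈ padicAffineGamma p, ∃ b ∈ padicAffineGamma p,
          x = a * g * b} : Set (PadicAffineGroup p ⧸ padicAffineGamma p)) = p ∧
      Nat.card (Quotient.mk (QuotientGroup.rightRel (padicAffineGamma p)) ''
        {x : PadicAffineGroup p | ∃ a ∈ padicAffineGamma p, ∃ b ∈ padicAffineGamma p,
          x = a * g * b}) = 1 := by
  set u := Units.mk0 (p : ℚ_[p]) (by exact_mod_cast hp.out.ne_zero)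
  have double_coset : {x : PadicAffineGroup p | ∃ a ∈ padicAffineGamma p,
      ∃ b ∈ padicAffineGamma p, x = a * g * b} =
        doubleCoset (inr u) (padicAffineGamma p) (padicAffineGamma p) := by
    subst hg
    exact Set.ext fun _ ↦ mem_doubleCoset.symm
  rw [double_coset]
  exact ⟨PadicAffineGroup.card_image_mk_doubleCoset_inr Padic.norm_p,
    PadicAffineGroup.card_image_mk_rightRel_doubleCoset_inr Padic.norm_p_lt_one.le⟩
end
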